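/- Let (Γ, v) be a rooted graph with the unique simple path property and let w be a vertex. Then the full subgraph w↑ on the set of vertices q from which w is reachable (including v) is rooted at v, has the unique simple path property, is quasilinear, and hence is linear. -/

import Mathlib

structure DGraph : Type 1 where
  V : Type
  E : Type
  ι : E → V
  τ : E → V

namespace DGraph

/-- A directed path from `u` to `w` given by its list of edges. -/
inductive Path (G : DGraph) : G.V → G.V → List G.E → Prop
  | nil (v : G.V) : Path G v v []
  | cons (e : G.E) {w : G.V} {p : List G.E} :
      Path G (G.τ e) w p → Path G (G.ι e) w (e :: p)

/-- The list of vertices visited by a path `p` starting at `u`. -/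
def verts (G : DGraph) (u : G.V) (p : List G.E) : List G.V :=
  u :: p.map G.τ

/-- A simple directed path: a path visiting no vertex twice. -/
def SimplePath (G : DGraph) (u w : G.V) (p : List G.E) : Prop :=
  G.Path u w p ∧ (G.verts u p).Nodup

/-- `w` is reachable from `u` by a directed path. -/
def Reach (G : DGraph) (u w : G.V) : Prop := ∃ p, G.Path u w p

/-- A graph is rooted at `v` if every vertex is reachable from `v`. -/
def Rooted (G : DGraph) (v : G.V) : Prop := ∀ w, G.Reach v w

end DGraph


namespace DGraph

/-- Reachability inside the full subgraph induced by the vertex set `S`. -/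
def ReachIn (G : DGraph) (S : Set G.V) (a b : G.V) : Prop :=
  ∃ p : List G.E, G.Path a b p ∧ ∀ e ∈ p, G.ι e ∈ S ∧ G.τ e ∈ S

/-! If `τ e` cannot reach `ι e`, then `τ e` does not lie on the simple path from `v` to `ι e`,
so the unique simple path to `τ e` is that path followed by `e`. Since every path contains a
simple path made of some of its edges, every path from `v` to `τ e` passes through `e`.

Following a path from `y` to `w` backwards, this shows that every vertex `y` of `w↑` is strongly
connected to a vertex of the simple path from `v` to `w`; the vertices of that path are totally
ordered, which gives quasilinearity. If `e ≠ f` are transition edges and `τ e ≻ τ f`, the walk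
`v → ι e → τ e → τ f` has to pass through `f`, and it can only do so after `e`, so `τ e ≻ ι f`. -/

variable {G : DGraph}

def UniqueSimplePaths (G : DGraph) (v : G.V) : Prop :=
  ∀ u, ∃! p, G.SimplePath v u p

theorem verts_cons (u : G.V) (e : G.E) (p : List G.E) :
    G.verts u (e :: p) = u :: G.verts (G.τ e) p := by
  simp [verts]

theorem verts_append (u : G.V) (p q : List G.E) :
    G.verts u (p ++ q) = G.verts u p ++ q.map G.τ := by
  simp [verts]

theorem Path.append {a b c : G.V} {p q : List G.E} (hp : G.Path a b p) (hq : G.Path b c q) :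
    G.Path a c (p ++ q) := by
  induction hp with
  | nil => simpa using hq
  | cons e _ ih => exact Path.cons e (ih hq)

theorem Reach.refl (u : G.V) : G.Reach u u := ⟨[], Path.nil u⟩

theorem Reach.trans {a b c : G.V} (h₁ : G.Reach a b) (h₂ : G.Reach b c) : G.Reach a c := by
  obtain ⟨p, hp⟩ := h₁
  obtain ⟨q, hq⟩ := h₂
  exact ⟨p ++ q, hp.append hq⟩

theorem reach_edge (e : G.E) : G.Reach (G.ι e) (G.τ e) :=
  ⟨[e], Path.cons e (Path.nil _)⟩

namespace Path

variable {a b : G.V} {p : List G.E}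

theorem reach (hp : G.Path a b p) : G.Reach a b := ⟨p, hp⟩

theorem end_mem_verts (hp : G.Path a b p) : b ∈ G.verts a p := by
  induction hp with
  | nil => simp [verts]
  | cons e _ ih => rw [verts_cons]; exact List.mem_cons_of_mem _ ih

theorem ι_mem_verts (hp : G.Path a b p) {e : G.E} (he : e ∈ p) : G.ι e ∈ G.verts a p := by
  induction hp with
  | nil => simp at he
  | cons f _ ih =>
    rw [verts_cons]
    rcases List.mem_cons.mp he with rfl | he
    · exact List.mem_cons_self
    · exact List.mem_cons_of_mem _ (ih he)

theorem exists_append_of_mem_verts (hp : G.Path a b p) {x : G.V} (hx : x ∈ G.verts a p) :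
    ∃ s₁ s₂, p = s₁ ++ s₂ ∧ G.Path a x s₁ ∧ G.Path x b s₂ ∧ G.verts x s₂ <:+ G.verts a p := by
  induction hp with
  | nil =>
    obtain rfl : x = _ := by simpa [verts] using hx
    exact ⟨[], [], rfl, Path.nil _, Path.nil _, List.suffix_refl _⟩
  | cons f hp ih =>
    rw [verts_cons] at hx ⊢
    rcases List.mem_cons.mp hx with rfl | hx
    · exact ⟨[], _, rfl, Path.nil _, Path.cons f hp, by rw [verts_cons]⟩
    · obtain ⟨s₁, s₂, rfl, h₁, h₂, hsuf⟩ := ih hx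
      exact ⟨f :: s₁, s₂, rfl, Path.cons f h₁, h₂, hsuf.trans (List.suffix_cons _ _)⟩

theorem reach_of_mem_verts (hp : G.Path a b p) {x : G.V} (hx : x ∈ G.verts a p) :
    G.Reach a x ∧ G.Reach x b := by
  obtain ⟨s₁, s₂, -, h₁, h₂, -⟩ := hp.exists_append_of_mem_verts hx
  exact ⟨h₁.reach, h₂.reach⟩

theorem reach_of_mem (hp : G.Path a b p) {e : G.E} (he : e ∈ p) :
    G.Reach a (G.ι e) ∧ G.Reach (G.τ e) b := by
  induction hp with
  | nil => simp at he
  | cons f hp ih =>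
    rcases List.mem_cons.mp he with rfl | he
    · exact ⟨Reach.refl _, hp.reach⟩
    · exact ⟨(reach_edge f).trans (ih he).1, (ih he).2⟩

theorem reach_or_reach_of_mem_verts (hp : G.Path a b p) {x y : G.V} (hx : x ∈ G.verts a p)
    (hy : y ∈ G.verts a p) : G.Reach x y ∨ G.Reach y x := by
  obtain ⟨s₁, s₂, rfl, h₁, h₂, -⟩ := hp.exists_append_of_mem_verts hx
  rw [verts_append] at hy
  rcases List.mem_append.mp hy with hy | hy
  · exact Or.inr (h₁.reach_of_mem_verts hy).2
  · exact Or.inl (h₂.reach_of_mem_verts (List.mem_cons_of_mem _ hy)).1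

theorem exists_simplePath_sublist (hp : G.Path a b p) : ∃ q, G.SimplePath a b q ∧ q.Sublist p := by
  induction hp with
  | nil u => exact ⟨[], ⟨Path.nil u, by simp [verts]⟩, List.nil_sublist _⟩
  | cons e _ ih =>
    obtain ⟨q, ⟨hq, hnodup⟩, hsub⟩ := ih
    by_cases hι : G.ι e ∈ G.verts (G.τ e) q
    · obtain ⟨s₁, s₂, rfl, -, h₂, hsuf⟩ := hq.exists_append_of_mem_verts hι
      exact ⟨s₂, ⟨h₂, hnodup.sublist hsuf.sublist⟩,
        ((List.suffix_append s₁ s₂).sublist.trans hsub).cons e⟩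
    · refine ⟨e :: q, ⟨Path.cons e hq, ?_⟩, hsub.cons_cons e⟩
      rw [verts_cons]
      exact hnodup.cons hι

theorem forall_mem_setOf_reach (hp : G.Path a b p) {w : G.V} (hb : G.Reach b w) :
    ∀ e ∈ p, G.ι e ∈ {q | G.Reach q w} ∧ G.τ e ∈ {q | G.Reach q w} := fun e he =>
  have hτ := (hp.reach_of_mem he).2.trans hb
  ⟨(reach_edge e).trans hτ, hτ⟩

end Path

theorem SimplePath.append_singleton {u : G.V} {q : List G.E} {e : G.E}
    (hq : G.SimplePath u (G.ι e) q) (he : G.τ e ∉ G.verts u q) :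
    G.SimplePath u (G.τ e) (q ++ [e]) := by
  refine ⟨hq.1.append (Path.cons e (Path.nil _)), ?_⟩
  rw [verts_append]
  simpa [List.nodup_append, hq.2] using fun x hx (hxe : x = G.τ e) => he (hxe ▸ hx)

theorem reachIn_setOf_reach_iff {a b w : G.V} (hb : G.Reach b w) :
    G.ReachIn {q | G.Reach q w} a b ↔ G.Reach a b :=
  ⟨fun ⟨p, hp, _⟩ => ⟨p, hp⟩, fun ⟨p, hp⟩ => ⟨p, hp, hp.forall_mem_setOf_reach hb⟩⟩

namespace UniqueSimplePaths

variable {v : G.V} (h : G.UniqueSimplePaths v)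
include h

theorem mem_of_path_of_not_reach {e : G.E} (he : ¬ G.Reach (G.τ e) (G.ι e)) {p : List G.E}
    (hp : G.Path v (G.τ e) p) : e ∈ p := by
  obtain ⟨q, hq, -⟩ := h (G.ι e)
  have hτq : G.τ e ∉ G.verts v q := fun hτ => he (hq.1.reach_of_mem_verts hτ).2
  obtain ⟨r, hr, hrp⟩ := hp.exists_simplePath_sublist
  have hr_eq : r = q ++ [e] := (h _).unique hr (hq.append_singleton hτq)
  exact hrp.subset (by simp [hr_eq])

theorem exists_mem_verts_reach_reach {u : G.V} {q : List G.E} (hq : G.SimplePath v u q)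
    {y : G.V} {p : List G.E} (hp : G.Path y u p) :
    ∃ c ∈ G.verts v q, G.Reach y c ∧ G.Reach c y := by
  induction hp with
  | nil z => exact ⟨z, hq.1.end_mem_verts, Reach.refl z, Reach.refl z⟩
  | cons e _ ih =>
    obtain ⟨c, hc, hτc, hcτ⟩ := ih hq
    by_cases hback : G.Reach (G.τ e) (G.ι e)
    · exact ⟨c, hc, (reach_edge e).trans hτc, hcτ.trans hback⟩
    obtain ⟨s₁, s₂, rfl, hs₁, -, -⟩ := hq.1.exists_append_of_mem_verts hc
    obtain ⟨r, hr⟩ := hcτ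
    rcases List.mem_append.mp (h.mem_of_path_of_not_reach hback (hs₁.append hr)) with he | he
    · exact ⟨G.ι e, hq.1.ι_mem_verts (List.mem_append_left _ he), Reach.refl _, Reach.refl _⟩
    · exact ⟨c, hc, (reach_edge e).trans hτc, (hr.reach_of_mem he).1⟩

theorem reach_or_reach_of_reach {a b w : G.V} (ha : G.Reach a w) (hb : G.Reach b w) :
    G.Reach a b ∨ G.Reach b a := by
  obtain ⟨q, hq, -⟩ := h w
  obtain ⟨pa, hpa⟩ := ha
  obtain ⟨pb, hpb⟩ := hb
  obtain ⟨ca, hca, hac, hca'⟩ := h.exists_mem_verts_reach_reach hq hpa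
  obtain ⟨cb, hcb, hbc, hcb'⟩ := h.exists_mem_verts_reach_reach hq hpb
  rcases hq.1.reach_or_reach_of_mem_verts hca hcb with hc | hc
  · exact Or.inl (hac.trans (hc.trans hcb'))
  · exact Or.inr (hbc.trans (hc.trans hca'))

theorem reach_ι_of_reach_τ {e f : G.E} (hef : e ≠ f) (he : ¬ G.Reach (G.τ e) (G.ι e))
    (hf : ¬ G.Reach (G.τ f) (G.ι f)) (hτ : G.Reach (G.τ e) (G.τ f)) :
    G.Reach (G.τ e) (G.ι f) := by
  obtain ⟨q, hq, -⟩ := h (G.ι e)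
  obtain ⟨s, hs⟩ := hτ
  rcases List.mem_append.mp (h.mem_of_path_of_not_reach hf (hq.1.append (Path.cons e hs)))
    with hfq | hfes
  · exact absurd (hs.reach.trans (hq.1.reach_of_mem hfq).2) he
  · rcases List.mem_cons.mp hfes with rfl | hfs
    · exact absurd rfl hef
    · exact (hs.reach_of_mem hfs).1

end UniqueSimplePaths

theorem up_subgraph_linear_general (G : DGraph) (v : G.V)
    (huspp : ∀ u : G.V, ∃! p : List G.E, G.SimplePath v u p) (w : G.V) :
    (∀ u ∈ {q : G.V | G.Reach q w},
        ∃! p : List G.E, G.SimplePath v u p ∧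
          ∀ e ∈ p, G.ι e ∈ {q : G.V | G.Reach q w} ∧
            G.τ e ∈ {q : G.V | G.Reach q w}) ∧
      (∀ a ∈ {q : G.V | G.Reach q w}, ∀ b ∈ {q : G.V | G.Reach q w},
        G.ReachIn {q : G.V | G.Reach q w} a b ∨
          G.ReachIn {q : G.V | G.Reach q w} b a) ∧
      (∀ e f : G.E,
        G.ι e ∈ {q : G.V | G.Reach q w} → G.τ e ∈ {q : G.V | G.Reach q w} →
        G.ι f ∈ {q : G.V | G.Reach q w} → G.τ f ∈ {q : G.V | G.Reach q w} →
        ¬ G.ReachIn {q : G.V | G.Reach q w} (G.τ e) (G.ι e) →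
        ¬ G.ReachIn {q : G.V | G.Reach q w} (G.τ f) (G.ι f) →
        e = f ∨ G.ReachIn {q : G.V | G.Reach q w} (G.τ e) (G.ι f) ∨
          G.ReachIn {q : G.V | G.Reach q w} (G.τ f) (G.ι e)) := by
  have hG : G.UniqueSimplePaths v := huspp
  refine ⟨fun u hu => ?_, fun a ha b hb => ?_, fun e f hιe hτe hιf hτf he hf => ?_⟩
  · obtain ⟨p, hp, hunique⟩ := huspp u
    exact ⟨p, ⟨hp, hp.1.forall_mem_setOf_reach hu⟩, fun q hq => hunique q hq.1⟩
  · rw [reachIn_setOf_reach_iff hb, reachIn_setOf_reach_iff ha]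
    exact hG.reach_or_reach_of_reach ha hb
  · rw [reachIn_setOf_reach_iff hιe] at he ⊢
    rw [reachIn_setOf_reach_iff hιf] at hf ⊢
    rcases eq_or_ne e f with rfl | hef
    · exact Or.inl rfl
    rcases hG.reach_or_reach_of_reach hτe hτf with hτ | hτ
    · exact Or.inr (Or.inl (hG.reach_ι_of_reach_τ hef he hf hτ))
    · exact Or.inr (Or.inr (hG.reach_ι_of_reach_τ hef.symm hf he hτ))

/-- Let `(Γ, v)` have the unique simple path property and let `w` be a vertex.
Then the full subgraph `w↑` on the vertices from which `w` is reachable is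
rooted at `v` with the unique simple path property, is quasilinear (any two of
its vertices are comparable for reachability within `w↑`), and is linear (its
transition edges form a chain). -/
theorem up_subgraph_linear (G : DGraph) (v : G.V) (hroot : G.Rooted v)
    (huspp : ∀ u : G.V, ∃! p : List G.E, G.SimplePath v u p) (w : G.V) :
    (∀ u ∈ {q : G.V | G.Reach q w},
        ∃! p : List G.E, G.SimplePath v u p ∧
          ∀ e ∈ p, G.ι e ∈ {q : G.V | G.Reach q w} ∧
            G.τ e ∈ {q : G.V | G.Reach q w}) ∧
      (∀ a ∈ {q : G.V | G.Reach q w}, ∀ b ∈ {q : G.V | G.Reach q w},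
        G.ReachIn {q : G.V | G.Reach q w} a b ∨
          G.ReachIn {q : G.V | G.Reach q w} b a) ∧
      (∀ e f : G.E,
        G.ι e ∈ {q : G.V | G.Reach q w} → G.τ e ∈ {q : G.V | G.Reach q w} →
        G.ι f ∈ {q : G.V | G.Reach q w} → G.τ f ∈ {q : G.V | G.Reach q w} →
        ¬ G.ReachIn {q : G.V | G.Reach q w} (G.τ e) (G.ι e) →
        ¬ G.ReachIn {q : G.V | G.Reach q w} (G.τ f) (G.ι f) →
        e = f ∨ G.ReachIn {q : G.V | G.Reach q w} (G.τ e) (G.ι f) ∨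
          G.ReachIn {q : G.V | G.Reach q w} (G.τ f) (G.ι e)) :=
  up_subgraph_linear_general G v huspp w

end DGraph
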